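/- As x → ∞, γ0(x)/x³ converges to a finite positive limit (namely 1/3), where γ0(x) = ∫_ℝ (n0(y)+f0(y+x))·y²·sgn(y) dy. -/

import Mathlib

open MeasureTheory Real

noncomputable def f0 (x : ℝ) : ℝ := 1 / (Real.exp x + 1)
noncomputable def n0 (y : ℝ) : ℝ := 1 / (Real.exp y - 1)
noncomputable def w (x : ℝ) : ℝ := f0 x * (1 - f0 x)
noncomputable def k0 (x y : ℝ) : ℝ := (n0 y + f0 (y + x)) * y ^ 2 * Real.sign y
noncomputable def K0bar (e u : ℝ) : ℝ := (n0 (u - e) + f0 u) * (u - e) ^ 2 * Real.sign (u - e)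
noncomputable def Gamma0 (e : ℝ) : ℝ := ∫ u, K0bar e u
noncomputable def gamma0 (x : ℝ) : ℝ := ∫ y, k0 x y

/-!
Substituting `y = x t` and reflecting the half-line `t < 0` with `n0 (-u) = -1 - n0 u` and
`f0 (-u) = 1 - f0 u` gives `γ0(x) / x³ = ∫ (n0 (x|t|) + f0 (x (|t| + sign t))) t² dt`
with a nonnegative integrand. As `x → ∞` it tends to `t²` on `(-1, 0)` and to `0` off
`[-1, 0]`, and for `x ≥ 1` it is dominated by `8 (1 + t²) e^{-|t|}`; by dominated convergence
the limit is `∫_{-1}^0 t² dt = 1/3`.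
-/

open Filter Set Topology

lemma Real.monotone_sign : Monotone Real.sign := by
  intro a b hab
  rcases lt_trichotomy a 0 with ha | rfl | ha
  · rw [Real.sign_of_neg ha]
    rcases Real.sign_apply_eq b with h | h | h <;> rw [h] <;> norm_num
  · rcases lt_trichotomy b 0 with hb | rfl | hb
    · exact absurd hab hb.not_ge
    · rfl
    · rw [Real.sign_zero, Real.sign_of_pos hb]; norm_num
  · rw [Real.sign_of_pos ha, Real.sign_of_pos (ha.trans_le hab)]

lemma Real.neg_one_le_sign (r : ℝ) : -1 ≤ Real.sign r := by
  rcases Real.sign_apply_eq r with h | h | h <;> rw [h] <;> norm_num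

lemma integrable_comp_abs_of_integrableOn_Ioi {E : Type*} [NormedAddCommGroup E] {f : ℝ → E}
    (hf : IntegrableOn f (Ioi 0)) : Integrable fun x => f |x| := by
  have hIoi : IntegrableOn (fun x => f |x|) (Ioi 0) :=
    hf.congr_fun (fun x hx => by rw [abs_of_pos (mem_Ioi.mp hx)]) measurableSet_Ioi
  rw [← integrableOn_univ, ← Iic_union_Ioi (a := (0 : ℝ)), integrableOn_union]
  refine ⟨?_, hIoi⟩
  have hIci := (integrableOn_Ici_iff_integrableOn_Ioi (by finiteness)).mpr hIoi
  rw [← (Measure.measurePreserving_neg (volume : Measure ℝ)).integrableOn_comp_preimage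
    (Homeomorph.neg ℝ).measurableEmbedding] at hIci
  simpa [Function.comp_def] using hIci

lemma integrable_one_add_sq_mul_exp_neg_abs :
    Integrable fun t : ℝ => (1 + t ^ 2) * exp (-|t|) := by
  have h : IntegrableOn (fun u : ℝ => (1 + u ^ 2) * exp (-u)) (Ioi 0) :=
    ((GammaIntegral_convergent one_pos).add (GammaIntegral_convergent three_pos)).congr_fun
      (fun u _ => by
        dsimp only [Pi.add_apply]
        rw [sub_self, rpow_zero, show (3 : ℝ) - 1 = 2 by norm_num, rpow_two]
        ring)
      measurableSet_Ioi
  simpa only [sq_abs] using integrable_comp_abs_of_integrableOn_Ioi h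

lemma f0_pos (u : ℝ) : 0 < f0 u := by
  unfold f0; positivity

lemma f0_le_one (u : ℝ) : f0 u ≤ 1 := by
  unfold f0
  rw [div_le_one (by positivity)]
  linarith [exp_pos u]

lemma f0_neg (u : ℝ) : f0 (-u) = 1 - f0 u := by
  unfold f0
  rw [exp_neg]
  field_simp
  ring

lemma f0_antitone : Antitone f0 := fun _ _ h =>
  one_div_le_one_div_of_le (by positivity) (by gcongr)

lemma f0_le_exp_neg (u : ℝ) : f0 u ≤ exp (-u) := by
  rw [f0, exp_neg, one_div]
  gcongr
  linarith

lemma f0_mul_le {x : ℝ} (hx : 1 ≤ x) (s : ℝ) : f0 (x * s) ≤ 2 * f0 s := by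
  rcases le_or_gt 0 s with hs | hs
  · linarith [f0_antitone (le_mul_of_one_le_left hs hx), f0_pos s]
  · -- `f0 (x * s) ≤ 1 ≤ 2 * f0 s`, since `f0 s ≥ f0 0 = 1 / 2`
    have h : f0 (-s) ≤ f0 0 := f0_antitone (by linarith)
    have h0 : f0 0 = 1 / 2 := by norm_num [f0]
    linarith [f0_neg s, f0_le_one (x * s)]

lemma n0_neg {u : ℝ} (hu : u ≠ 0) : n0 (-u) = -1 - n0 u := by
  have h1 : exp u - 1 ≠ 0 := by
    rw [sub_ne_zero, Ne, exp_eq_one_iff]; exact hu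
  have h2 : 1 - exp u ≠ 0 := fun h => h1 (by linarith)
  unfold n0
  rw [exp_neg]
  field_simp
  ring

lemma n0_nonneg {u : ℝ} (hu : 0 ≤ u) : 0 ≤ n0 u := by
  unfold n0
  have : 0 ≤ exp u - 1 := by linarith [add_one_le_exp u]
  positivity

lemma n0_antitoneOn : AntitoneOn n0 (Ioi 0) := fun a ha _ _ hab =>
  one_div_le_one_div_of_le (by linarith [add_one_le_exp a, mem_Ioi.mp ha]) (by gcongr)

lemma n0_mul_le {x u : ℝ} (hx : 1 ≤ x) (hu : 0 ≤ u) : n0 (x * u) ≤ n0 u := by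
  rcases hu.eq_or_lt with rfl | hu
  · simp
  · exact n0_antitoneOn hu (mem_Ioi.2 (mul_pos (by linarith) hu))
      (le_mul_of_one_le_left hu.le hx)

lemma sq_mul_n0_le {u : ℝ} (hu : 0 ≤ u) : u ^ 2 * n0 u ≤ u * (1 + u) * exp (-u) := by
  rcases hu.eq_or_lt with rfl | hu
  · simp
  have h := add_one_le_exp u
  have : 0 < exp u - 1 := by linarith
  rw [n0, exp_neg, mul_one_div, div_le_iff₀ this]
  field_simp
  nlinarith

lemma tendsto_n0_atTop : Tendsto n0 atTop (𝓝 0) := by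
  refine (tendsto_atTop_add_const_right _ (-1) tendsto_exp_atTop).inv_tendsto_atTop.congr ?_
  simp [n0, sub_eq_add_neg]

lemma tendsto_f0_atTop : Tendsto f0 atTop (𝓝 0) := by
  refine (tendsto_atTop_add_const_right _ 1 tendsto_exp_atTop).inv_tendsto_atTop.congr ?_
  simp [f0]

lemma tendsto_f0_atBot : Tendsto f0 atBot (𝓝 1) := by
  have h := (tendsto_exp_atBot.add_const 1).inv₀ (by norm_num)
  rw [zero_add, inv_one] at h
  exact h.congr fun u => by simp [f0]

lemma tendsto_f0_mul_atTop {s : ℝ} (hs : s ≠ 0) :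
    Tendsto (fun x => f0 (x * s)) atTop (𝓝 ((Iio 0).indicator 1 s)) := by
  rcases hs.lt_or_gt with hs | hs
  · simpa [hs, Function.comp_def] using
      tendsto_f0_atBot.comp (tendsto_id.atTop_mul_const_of_neg hs)
  · simpa [hs.not_gt, Function.comp_def] using
      tendsto_f0_atTop.comp (tendsto_id.atTop_mul_const hs)

noncomputable def rescaledKernel (x t : ℝ) : ℝ :=
  (n0 (x * |t|) + f0 (x * (|t| + Real.sign t))) * t ^ 2

lemma k0_mul_eq {x : ℝ} (hx : 0 < x) (t : ℝ) : k0 x (x * t) = x ^ 2 * rescaledKernel x t := by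
  unfold k0 rescaledKernel
  rcases lt_trichotomy t 0 with ht | rfl | ht
  · rw [Real.sign_of_neg (mul_neg_of_pos_of_neg hx ht), abs_of_neg ht, Real.sign_of_neg ht,
      show x * t = -(x * -t) by ring, n0_neg (by nlinarith),
      show -(x * -t) + x = -(x * (-t + -1)) by ring, f0_neg]
    ring
  · simp
  · rw [Real.sign_of_pos (mul_pos hx ht), abs_of_pos ht, Real.sign_of_pos ht, mul_add_one]
    ring

lemma gamma0_div_cube_eq {x : ℝ} (hx : 0 < x) : gamma0 x / x ^ 3 = ∫ t, rescaledKernel x t := by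
  have h := Measure.integral_comp_mul_left (k0 x) x
  simp_rw [k0_mul_eq hx, integral_const_mul, abs_of_pos (inv_pos.2 hx), smul_eq_mul] at h
  rw [gamma0, div_eq_iff (by positivity)]
  field_simp at h
  linear_combination -h

lemma measurable_rescaledKernel (x : ℝ) : Measurable (rescaledKernel x) := by
  have hn : Measurable n0 := by unfold n0; fun_prop
  have hf : Measurable f0 := by unfold f0; fun_prop
  have hs := Real.monotone_sign.measurable
  unfold rescaledKernel
  fun_prop

lemma abs_rescaledKernel_le {x : ℝ} (hx : 1 ≤ x) (t : ℝ) :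
    |rescaledKernel x t| ≤ 8 * ((1 + t ^ 2) * exp (-|t|)) := by
  have hu : 0 ≤ |t| := abs_nonneg t
  have hn : |t| ^ 2 * n0 (x * |t|) ≤ |t| * (1 + |t|) * exp (-|t|) :=
    (mul_le_mul_of_nonneg_left (n0_mul_le hx hu) (sq_nonneg _)).trans (sq_mul_n0_le hu)
  have hf : f0 (x * (|t| + Real.sign t)) ≤ 6 * exp (-|t|) := calc
    f0 (x * (|t| + Real.sign t)) ≤ 2 * f0 (|t| + Real.sign t) := f0_mul_le hx _
    _ ≤ 2 * f0 (|t| - 1) :=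
      mul_le_mul_of_nonneg_left (f0_antitone (by linarith [Real.neg_one_le_sign t])) zero_le_two
    _ ≤ 2 * (exp 1 * exp (-|t|)) := by
      rw [← exp_add, show 1 + -|t| = -(|t| - 1) by ring]
      linarith [f0_le_exp_neg (|t| - 1)]
    _ ≤ 6 * exp (-|t|) := by nlinarith [exp_one_lt_three, exp_pos (-|t|)]
  have hpos : 0 ≤ n0 (x * |t|) + f0 (x * (|t| + Real.sign t)) :=
    add_nonneg (n0_nonneg (by positivity)) (f0_pos _).le
  rw [rescaledKernel, ← sq_abs t, abs_of_nonneg (by positivity)]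
  nlinarith [mul_le_mul_of_nonneg_left hf (sq_nonneg |t|), exp_pos (-|t|),
    mul_nonneg hu (exp_pos (-|t|)).le, sq_nonneg (|t| - 1)]

lemma tendsto_rescaledKernel {t : ℝ} (h0 : t ≠ 0) (h1 : t ≠ -1) :
    Tendsto (fun x => rescaledKernel x t) atTop (𝓝 ((Ioo (-1) 0).indicator (· ^ 2) t)) := by
  have hs : |t| + Real.sign t ∈ Iio 0 ↔ t ∈ Ioo (-1) 0 := by
    rcases h0.lt_or_gt with ht | ht
    · rw [abs_of_neg ht, Real.sign_of_neg ht, mem_Ioo, mem_Iio]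
      simp only [ht, and_true]
      constructor <;> intro <;> linarith
    · rw [abs_of_pos ht, Real.sign_of_pos ht, mem_Ioo, mem_Iio]
      constructor <;> intro <;> linarith
  have hs0 : |t| + Real.sign t ≠ 0 := by
    rcases h0.lt_or_gt with ht | ht
    · rw [abs_of_neg ht, Real.sign_of_neg ht]
      intro h; exact h1 (by linarith)
    · rw [abs_of_pos ht, Real.sign_of_pos ht]; linarith
  have h := ((tendsto_n0_atTop.comp (tendsto_id.atTop_mul_const (abs_pos.2 h0))).add
    (tendsto_f0_mul_atTop hs0)).mul_const (t ^ 2)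
  by_cases ht : t ∈ Ioo (-1) 0
  · rw [indicator_of_mem (hs.2 ht), Pi.one_apply, zero_add, one_mul] at h
    rwa [indicator_of_mem ht]
  · rw [indicator_of_notMem (mt hs.1 ht), add_zero, zero_mul] at h
    rwa [indicator_of_notMem ht]

lemma integral_indicator_Ioo_sq : ∫ t, (Ioo (-1 : ℝ) 0).indicator (· ^ 2) t = 1 / 3 := by
  rw [integral_indicator measurableSet_Ioo, ← integral_Ioc_eq_integral_Ioo,
    ← intervalIntegral.integral_of_le (by norm_num), integral_pow]
  norm_num

theorem gamma0_cubic_growth :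
    Filter.Tendsto (fun x : ℝ => gamma0 x / x ^ 3) Filter.atTop (nhds (1 / 3)) := by
  have h_ae : ∀ᵐ t : ℝ, t ∉ ({0, -1} : Set ℝ) := (toFinite _).countable.ae_notMem _
  have h := tendsto_integral_filter_of_dominated_convergence _
    (Eventually.of_forall fun x => (measurable_rescaledKernel x).aestronglyMeasurable)
    ((eventually_ge_atTop 1).mono fun x hx => Eventually.of_forall (abs_rescaledKernel_le hx))
    (integrable_one_add_sq_mul_exp_neg_abs.const_mul 8)
    (h_ae.mono fun t ht => by
      simp only [mem_insert_iff, mem_singleton_iff, not_or] at ht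
      exact tendsto_rescaledKernel ht.1 ht.2)
  rw [integral_indicator_Ioo_sq] at h
  exact h.congr' ((eventually_gt_atTop 0).mono fun x hx => (gamma0_div_cube_eq hx).symm)
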